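/- arXiv:1907.10565 — 7 statements merged into one kernel-verified Lean document; each statement's English description precedes it below -/
import Mathlib

section
/- Let Φ : ℝ → ℝ be strictly convex and differentiable, let s₁,…,s_K ∈ ℝ, and let α ∈ ℝ. Suppose ν̂ = (ν̂₁,…,ν̂_K) minimizes F(ν) = ∑_{k=1}^K (Φ(ν_k) − ν_k s_k) over the monotone cone {ν ∈ ℝ^K : ν₁ ≤ ν₂ ≤ ⋯ ≤ ν_K}. Then the vector μ̂ defined by μ̂_k = max(ν̂_k, α) minimizes F over the truncated cone {μ ∈ ℝ^K : α ≤ μ₁ ≤ μ₂ ≤ ⋯ ≤ μ_K}. -/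
/-!
Write `F(ν) = ∑ k, (Φ (ν k) - ν k * s k)`. Given `μ` in the truncated cone, compare it with
`c = μ + min ν α - α`, which is again monotone, so `F ν̂ ≤ F c` by minimality of `ν̂`. Coordinatewise,
`max ν̂ α + c = ν̂ + μ`, and where `ν̂ k < α ≤ μ k` the pair `(α, c k)` lies between `ν̂ k` and `μ k`
with the same sum, so convexity of `Φ` gives `F (max ν̂ α) + F c ≤ F ν̂ + F μ`. Hence `F (max ν̂ α) ≤ F μ`.
-/

open Finset

section Convex

variable {𝕜 : Type*} [Field 𝕜] [LinearOrder 𝕜] [IsStrictOrderedRing 𝕜] {s : Set 𝕜} {f : 𝕜 → 𝕜}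

theorem ConvexOn.map_add_map_sub_le (hf : ConvexOn 𝕜 s f) {x y a : 𝕜} (hx : x ∈ s) (hy : y ∈ s)
    (hxa : x ≤ a) (hay : a ≤ y) : f a + f (x + y - a) ≤ f x + f y := by
  rcases (hxa.trans hay).eq_or_lt with rfl | hxy
  · obtain rfl : a = x := le_antisymm hay hxa
    simp
  set t := (y - a) / (y - x)
  have hyx : 0 < y - x := sub_pos.mpr hxy
  have ht₀ : 0 ≤ t := div_nonneg (sub_nonneg.mpr hay) hyx.le
  have ht₁ : 0 ≤ 1 - t := by
    rw [sub_nonneg, div_le_one hyx]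
    linarith
  have ha : t * x + (1 - t) * y = a := by
    simp only [t]
    field_simp
    ring
  have hb : (1 - t) * x + t * y = x + y - a := by linear_combination -ha
  have h₁ := hf.2 hx hy ht₀ ht₁ (add_sub_cancel t 1)
  have h₂ := hf.2 hx hy ht₁ ht₀ (sub_add_cancel 1 t)
  simp only [smul_eq_mul, ha, hb] at h₁ h₂
  linarith

end Convex

theorem sum_truncate_add_sum_le {ι : Type*} [Fintype ι] {Φ : ℝ → ℝ} (hΦ : ConvexOn ℝ Set.univ Φ)
    (s ν μ : ι → ℝ) {α : ℝ} (hμα : ∀ k, α ≤ μ k) :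
    ∑ k, (Φ (max (ν k) α) - max (ν k) α * s k)
        + ∑ k, (Φ (μ k + min (ν k) α - α) - (μ k + min (ν k) α - α) * s k) ≤
      ∑ k, (Φ (ν k) - ν k * s k) + ∑ k, (Φ (μ k) - μ k * s k) := by
  simp only [← sum_add_distrib]
  refine sum_le_sum fun k _ => ?_
  rcases le_total α (ν k) with h | h
  · simp [max_eq_left h, min_eq_right h]
  · have := hΦ.map_add_map_sub_le (Set.mem_univ _) (Set.mem_univ _) h (hμα k)
    rw [max_eq_right h, min_eq_left h, show ν k + μ k - α = μ k + ν k - α by ring] at *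
    linarith

theorem stmt_0_general (K : ℕ) (Φ : ℝ → ℝ)
    (hΦconv : StrictConvexOn ℝ Set.univ Φ)
    (s : Fin K → ℝ) (α : ℝ) (ν : Fin K → ℝ) (hν_mono : Monotone ν)
    (hν_min : ∀ ν' : Fin K → ℝ, Monotone ν' →
      ∑ k, (Φ (ν k) - ν k * s k) ≤ ∑ k, (Φ (ν' k) - ν' k * s k)) :
    Monotone (fun k => max (ν k) α) ∧ (∀ k, α ≤ max (ν k) α) ∧
      ∀ μ : Fin K → ℝ, Monotone μ → (∀ k, α ≤ μ k) →
        ∑ k, (Φ (max (ν k) α) - max (ν k) α * s k) ≤ ∑ k, (Φ (μ k) - μ k * s k) := by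
  refine ⟨fun j k hjk => max_le_max_right α (hν_mono hjk), fun k => le_max_right _ _, ?_⟩
  intro μ hμ_mono hμα
  have hc_mono : Monotone fun k => μ k + min (ν k) α - α := fun j k hjk =>
    sub_le_sub_right (add_le_add (hμ_mono hjk) (min_le_min_right α (hν_mono hjk))) α
  have := hν_min _ hc_mono
  have := sum_truncate_add_sum_le hΦconv.convexOn s ν μ hμα
  linarith

/-- If `ν̂` minimizes the isotonic-type objective
`F(ν) = ∑ k, (Φ (ν k) - ν k * s k)` over the monotone cone, then
`μ̂ = fun k => max (ν̂ k) α` minimizes `F` over the truncated cone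
`{μ | α ≤ μ₁ ≤ ⋯ ≤ μ_K}`. -/
theorem stmt_0 (K : ℕ) (hK : 1 ≤ K) (Φ : ℝ → ℝ)
    (hΦconv : StrictConvexOn ℝ Set.univ Φ) (hΦdiff : Differentiable ℝ Φ)
    (s : Fin K → ℝ) (α : ℝ) (ν : Fin K → ℝ) (hν_mono : Monotone ν)
    (hν_min : ∀ ν' : Fin K → ℝ, Monotone ν' →
      ∑ k, (Φ (ν k) - ν k * s k) ≤ ∑ k, (Φ (ν' k) - ν' k * s k)) :
    Monotone (fun k => max (ν k) α) ∧ (∀ k, α ≤ max (ν k) α) ∧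
      ∀ μ : Fin K → ℝ, Monotone μ → (∀ k, α ≤ μ k) →
        ∑ k, (Φ (max (ν k) α) - max (ν k) α * s k) ≤ ∑ k, (Φ (μ k) - μ k * s k) :=
  stmt_0_general K Φ hΦconv s α ν hν_mono hν_min
end

section
/- Let γ > 0 and r₁,…,r_K ∈ ℝ. Suppose (μ₁,…,μ_K) minimizes ∑_{k=1}^K (−log(−μ_k) − μ_k r_k²) subject to μ₁ ≤ μ₂ ≤ ⋯ ≤ μ_K < 0. Then the vector (w₁,…,w_K) defined by w_k = −max(μ_k, −1/γ²) minimizes ∑_{k=1}^K (−log w_k + w_k r_k²) subject to 0 < w_K ≤ w_{K−1} ≤ ⋯ ≤ w₁ ≤ 1/γ². -/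
open Filter

/-- log difference bound for negative numbers. -/
private lemma log_lem (a b : ℝ) (ha : a < 0) (hb : b < 0) :
    Real.log (-b) - Real.log (-a) ≤ b / a - 1 := by
  have hpos : (0 : ℝ) < b / a := div_pos_of_neg_of_neg hb ha
  have h1 : Real.log (b / a) ≤ b / a - 1 := Real.log_le_sub_one_of_pos hpos
  have h2 : Real.log (b / a) = Real.log (-b) - Real.log (-a) := by
    rw [show b / a = (-b) / (-a) by ring, Real.log_div (by linarith) (by linarith)]
  linarith [h2 ▸ h1]

/-- Convexity gradient inequality (lower form) for φ(t) = -log(-t) - t·s. -/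
private lemma key1 (s a b : ℝ) (ha : a < 0) (hb : b < 0) :
    (-1 / a - s) * (b - a) ≤ (-Real.log (-b) - b * s) - (-Real.log (-a) - a * s) := by
  have h := log_lem a b ha hb
  have hne : a ≠ 0 := ne_of_lt ha
  have he : (-1 / a - s) * (b - a) = -(b / a - 1) - s * (b - a) := by
    field_simp
  linarith [he]

/-- Convexity gradient inequality (upper form) for φ(t) = -log(-t) - t·s. -/
private lemma key2 (s a b : ℝ) (ha : a < 0) (hb : b < 0) :
    (-Real.log (-b) - b * s) - (-Real.log (-a) - a * s) ≤ (-1 / b - s) * (b - a) := by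
  have h := log_lem b a hb ha
  have hne : b ≠ 0 := ne_of_lt hb
  have he : (-1 / b - s) * (b - a) = (a / b - 1) - s * (b - a) := by
    field_simp
    ring
  linarith [he]

/-- If `μ` minimizes `∑ k, (-log (-μ k) - μ k * r k ^ 2)` over nondecreasing
negative vectors, then `w k = -max (μ k) (-1/γ²)` minimizes `∑ k, (-log (w k) + w k * r k ^ 2)`
over nonincreasing positive weights bounded above by `1/γ²`. -/
theorem stmt_1 (K : ℕ) (hK : 1 ≤ K) (γ : ℝ) (hγ : 0 < γ) (r μ : Fin K → ℝ)
    (hμ_mono : Monotone μ) (hμ_neg : ∀ k, μ k < 0)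
    (hμ_min : ∀ ν : Fin K → ℝ, Monotone ν → (∀ k, ν k < 0) →
      ∑ k, (-Real.log (-μ k) - μ k * r k ^ 2) ≤ ∑ k, (-Real.log (-ν k) - ν k * r k ^ 2)) :
    (∀ k, 0 < -max (μ k) (-(1 / γ ^ 2))) ∧
    Antitone (fun k => -max (μ k) (-(1 / γ ^ 2))) ∧
    (∀ k, -max (μ k) (-(1 / γ ^ 2)) ≤ 1 / γ ^ 2) ∧
    ∀ w : Fin K → ℝ, Antitone w → (∀ k, 0 < w k) → (∀ k, w k ≤ 1 / γ ^ 2) →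
      ∑ k, (-Real.log (-max (μ k) (-(1 / γ ^ 2))) + (-max (μ k) (-(1 / γ ^ 2))) * r k ^ 2)
        ≤ ∑ k, (-Real.log (w k) + w k * r k ^ 2) := by
  have hγ2 : (0 : ℝ) < 1 / γ ^ 2 := by positivity
  set c : ℝ := -(1 / γ ^ 2) with hc_def
  have hc : c < 0 := by simp only [hc_def]; linarith
  have hp_neg : ∀ k, max (μ k) c < 0 := fun k => max_lt (hμ_neg k) hc
  refine ⟨fun k => by linarith [hp_neg k], ?_, fun k => by
      have := le_max_right (μ k) c; simp only [hc_def] at this ⊢; linarith, ?_⟩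
  · intro i j hij
    simp only [neg_le_neg_iff]
    exact max_le_max (hμ_mono hij) le_rfl
  intro w hw_anti hw_pos hw_le
  -- abbreviations
  set s : Fin K → ℝ := fun k => r k ^ 2 with hs_def
  -- the comparison vector q := -w
  set q : Fin K → ℝ := fun k => -(w k) with hq_def
  have hq_neg : ∀ k, q k < 0 := fun k => by simp [hq_def]; exact hw_pos k
  have hq_mono : Monotone q := fun i j hij => neg_le_neg (hw_anti hij)
  have hq_ge : ∀ k, c ≤ q k := fun k => by
    have := hw_le k; simp only [hq_def, hc_def]; linarith
  -- direction d
  set d : Fin K → ℝ := fun k => q k - max (μ k) c with hd_def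
  have hx_eq : ∀ k, μ k + d k = q k + min (μ k - c) 0 := by
    intro k
    simp only [hd_def]
    rcases le_total (μ k) c with h | h
    · rw [max_eq_right h, min_eq_left (by linarith)]; ring
    · rw [max_eq_left h, min_eq_right (by linarith)]; ring
  have hx_mono : ∀ i j : Fin K, i ≤ j → μ i + d i ≤ μ j + d j := by
    intro i j hij
    rw [hx_eq i, hx_eq j]
    have h1 := hμ_mono hij
    have h2 := hq_mono hij
    have h3 : min (μ i - c) 0 ≤ min (μ j - c) 0 := min_le_min (by linarith) le_rfl
    linarith
  have hx_neg : ∀ k, μ k + d k < 0 := by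
    intro k
    rw [hx_eq k]
    have := hq_neg k
    have : min (μ k - c) 0 ≤ 0 := min_le_right _ _
    linarith [hq_neg k]
  -- Step A1 : difference quotient bound for t ∈ (0,1]
  have hA1 : ∀ t : ℝ, t ∈ Set.Ioc (0 : ℝ) 1 →
      0 ≤ ∑ k, (-1 / (μ k + t * d k) - s k) * d k := by
    intro t ht
    obtain ⟨ht0, ht1⟩ := ht
    have hν_neg : ∀ k, μ k + t * d k < 0 := by
      intro k
      have h1 : μ k + t * d k = (1 - t) * μ k + t * (μ k + d k) := by ring
      rw [h1]
      have h2 : (1 - t) * μ k ≤ 0 :=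
        mul_nonpos_of_nonneg_of_nonpos (by linarith) (le_of_lt (hμ_neg k))
      have h3 : t * (μ k + d k) < 0 := mul_neg_of_pos_of_neg ht0 (hx_neg k)
      linarith
    have hν_mono : Monotone (fun k => μ k + t * d k) := by
      intro i j hij
      have h1 : (0 : ℝ) ≤ (1 - t) * (μ j - μ i) :=
        mul_nonneg (by linarith) (by linarith [hμ_mono hij])
      have h2 : (0 : ℝ) ≤ t * ((μ j + d j) - (μ i + d i)) :=
        mul_nonneg (le_of_lt ht0) (by linarith [hx_mono i j hij])
      show μ i + t * d i ≤ μ j + t * d j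
      nlinarith [h1, h2]
    have hmin := hμ_min (fun k => μ k + t * d k) hν_mono hν_neg
    have hterm : ∀ k ∈ Finset.univ,
        (-Real.log (-(μ k + t * d k)) - (μ k + t * d k) * r k ^ 2)
          - (-Real.log (-μ k) - μ k * r k ^ 2)
          ≤ t * ((-1 / (μ k + t * d k) - s k) * d k) := by
      intro k _
      have := key2 (s k) (μ k) (μ k + t * d k) (hμ_neg k) (hν_neg k)
      simp only [hs_def] at this ⊢
      nlinarith [this]
    have hsum := Finset.sum_le_sum hterm
    rw [Finset.sum_sub_distrib, ← Finset.mul_sum] at hsum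
    have h4 : 0 ≤ t * ∑ k, (-1 / (μ k + t * d k) - s k) * d k := by linarith
    exact nonneg_of_mul_nonneg_right h4 ht0
  -- Step A2 : take the limit t → 0⁺
  have hA2 : 0 ≤ ∑ k, (-1 / (μ k) - s k) * d k := by
    have hlim : Tendsto (fun t : ℝ => ∑ k, (-1 / (μ k + t * d k) - s k) * d k)
        (nhdsWithin 0 (Set.Ioi 0)) (nhds (∑ k, (-1 / (μ k) - s k) * d k)) := by
      apply tendsto_finset_sum
      intro k _
      have hne : μ k + (0 : ℝ) * d k ≠ 0 := by
        simpa using ne_of_lt (hμ_neg k)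
      have hcont : ContinuousAt (fun t : ℝ => (-1 / (μ k + t * d k) - s k) * d k) 0 := by
        apply ContinuousAt.mul _ continuousAt_const
        apply ContinuousAt.sub _ continuousAt_const
        exact continuousAt_const.div (by fun_prop) hne
      have h5 : Filter.Tendsto (fun t : ℝ => (-1 / (μ k + t * d k) - s k) * d k)
          (nhdsWithin 0 (Set.Ioi 0)) (nhds ((-1 / (μ k + (0:ℝ) * d k) - s k) * d k)) :=
        hcont.tendsto.mono_left nhdsWithin_le_nhds
      simpa using h5
    refine ge_of_tendsto hlim ?_
    filter_upwards [Ioc_mem_nhdsGT_of_mem (Set.mem_Ico.mpr ⟨le_rfl, one_pos⟩)] with t ht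
    exact hA1 t ht
  -- Steps B and C : per-coordinate comparison
  have hBC : ∀ k ∈ Finset.univ,
      (-1 / (μ k) - s k) * d k ≤
        (-Real.log (-q k) - q k * s k) - (-Real.log (-(max (μ k) c)) - max (μ k) c * s k) := by
    intro k _
    have hB := key1 (s k) (max (μ k) c) (q k) (hp_neg k) (hq_neg k)
    have hC : (-1 / (μ k) - s k) * d k ≤ (-1 / max (μ k) c - s k) * d k := by
      rcases le_total c (μ k) with h | h
      · rw [max_eq_left h]
      · rw [max_eq_right h]
        have h1 : 1 / c ≤ 1 / (μ k) := one_div_le_one_div_of_neg_of_le hc h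
        have h2 : (0 : ℝ) ≤ d k := by
          simp only [hd_def, max_eq_right h]
          linarith [hq_ge k]
        have h1' : -1 / μ k ≤ -1 / c := by
          rw [neg_div, neg_div]; linarith
        apply mul_le_mul_of_nonneg_right _ h2
        linarith
    calc (-1 / (μ k) - s k) * d k ≤ (-1 / max (μ k) c - s k) * d k := hC
      _ ≤ _ := by simpa only [hd_def] using hB
  have hsum2 := Finset.sum_le_sum hBC
  rw [Finset.sum_sub_distrib] at hsum2
  -- assemble
  have hfinal : ∑ k, (-Real.log (-(max (μ k) c)) - max (μ k) c * s k)
      ≤ ∑ k, (-Real.log (-q k) - q k * s k) := by linarith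
  calc ∑ k, (-Real.log (-max (μ k) c) + (-max (μ k) c) * r k ^ 2)
      = ∑ k, (-Real.log (-(max (μ k) c)) - max (μ k) c * s k) := by
        refine Finset.sum_congr rfl fun k _ => by simp only [hs_def]; ring
    _ ≤ ∑ k, (-Real.log (-q k) - q k * s k) := hfinal
    _ = ∑ k, (-Real.log (w k) + w k * r k ^ 2) := by
        refine Finset.sum_congr rfl fun k _ => by
          simp only [hq_def, hs_def, neg_neg]; ring
end

section
/- Let s₁,…,s_K > 0, set S₀ = 0 and S_k = s₁ + ⋯ + s_k for k = 1,…,K. Let S̄ : [0,K] → ℝ be the greatest convex minorant of the data points, i.e. the pointwise-largest convex function g on [0,K] satisfying g(k) ≤ S_k for every integer k = 0,…,K. Then S̄(k) − S̄(k−1) > 0 for every k, and the vector μ̂ defined by μ̂_k = −1/(S̄(k) − S̄(k−1)) minimizes ∑_{k=1}^K (−log(−μ_k) − μ_k s_k) subject to μ₁ ≤ μ₂ ≤ ⋯ ≤ μ_K < 0. -/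
/-!
The greatest convex minorant `S̄` touches the data at `0` and `K`, its increments are
nondecreasing by convexity and at least `min s > 0` because the line of slope `min s` through
`(0, 0)` is a convex minorant, and wherever `S̄ k < S k` it is affine on `[k - 1, k + 1]`.
So `μ̂ k = -1 / (S̄ k - S̄ (k - 1))` is feasible, and `D k = S̄ k - S k` is a Karush–Kuhn–Tucker
certificate: summing the tangent inequalities of the convex objective and summing by parts
against `D` proves optimality.
-/

open Finset

theorem Nat.cast_mem_Icc_of_le {k K : ℕ} (hk : k ≤ K) : (k : ℝ) ∈ Set.Icc 0 (K : ℝ) :=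
  ⟨k.cast_nonneg, by exact_mod_cast hk⟩

theorem abs_sub_le_sum_range (S : ℕ → ℝ) {k K : ℕ} (hk : k ≤ K) (j : ℕ) :
    |S k - S j| ≤ ∑ n ∈ range (K + 1), |S n - S j| :=
  single_le_sum (fun n _ => abs_nonneg (S n - S j)) (mem_range.2 (Nat.lt_succ_of_le hk))

theorem convexOn_affine {s : Set ℝ} (hs : Convex ℝ s) (a b : ℝ) :
    ConvexOn ℝ s fun x => a * x + b :=
  ((LinearMap.mul ℝ ℝ a).convexOn hs).add_const b

theorem concaveOn_affine {s : Set ℝ} (hs : Convex ℝ s) (a b : ℝ) :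
    ConcaveOn ℝ s fun x => a * x + b :=
  ((LinearMap.mul ℝ ℝ a).concaveOn hs).add_const b

namespace ConvexOn

variable {s : Set ℝ} {f : ℝ → ℝ}

theorem apply_sub_apply_sub_one_le (hf : ConvexOn ℝ s f) {x : ℝ} (h₁ : x - 1 ∈ s)
    (h₂ : x + 1 ∈ s) : f x - f (x - 1) ≤ f (x + 1) - f x := by
  simpa using hf.slope_mono_adjacent h₁ h₂ (sub_one_lt x) (lt_add_one x)

theorem secant_le_of_notMem_Ioo (hf : ConvexOn ℝ s f) {x y z : ℝ} (hx : x ∈ s) (hy : y ∈ s)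
    (hz : z ∈ s) (hxy : x < y) (hzxy : z ∉ Set.Ioo x y) :
    f x + (f y - f x) / (y - x) * (z - x) ≤ f z := by
  set a := (f y - f x) / (y - x)
  have hg : ConvexOn ℝ s fun t => f t - (a * t + (f x - a * x)) :=
    hf.sub (concaveOn_affine hf.1 _ _)
  have hgx : f x - (a * x + (f x - a * x)) = 0 := by ring
  have hgy : f y - (a * y + (f x - a * x)) = 0 := by
    simp only [a]; field_simp [(sub_pos.2 hxy).ne']; ring
  rcases not_and_or.1 hzxy with hzx | hyz
  · have := hg.le_left_of_right_le'' hz hy (not_lt.1 hzx) hxy (by simp only [hgx, hgy, le_refl])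
    linarith
  · have := hg.le_right_of_left_le'' hx hz hxy (not_lt.1 hyz) (by simp only [hgx, hgy, le_refl])
    linarith

end ConvexOn

structure IsGreatestConvexMinorant (K : ℕ) (S : ℕ → ℝ) (f : ℝ → ℝ) : Prop where
  convexOn : ConvexOn ℝ (Set.Icc 0 (K : ℝ)) f
  le_data : ∀ k : ℕ, k ≤ K → f k ≤ S k
  le_of_convexOn : ∀ g : ℝ → ℝ, ConvexOn ℝ (Set.Icc 0 (K : ℝ)) g →
    (∀ k : ℕ, k ≤ K → g k ≤ S k) → ∀ x ∈ Set.Icc 0 (K : ℝ), g x ≤ f x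

namespace IsGreatestConvexMinorant

variable {K : ℕ} {S : ℕ → ℝ} {f : ℝ → ℝ}

theorem affine_le (h : IsGreatestConvexMinorant K S f) {a b : ℝ}
    (hab : ∀ k : ℕ, k ≤ K → a * k + b ≤ S k) : ∀ x ∈ Set.Icc 0 (K : ℝ), a * x + b ≤ f x :=
  h.le_of_convexOn _ (convexOn_affine (convex_Icc _ _) a b) hab

theorem apply_eq_of_affine_le (h : IsGreatestConvexMinorant K S f) {a b : ℝ}
    (hab : ∀ k : ℕ, k ≤ K → a * k + b ≤ S k) {j : ℕ} (hj : j ≤ K) (heq : a * j + b = S j) :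
    f j = S j :=
  le_antisymm (h.le_data j hj) (heq ▸ h.affine_le hab j (Nat.cast_mem_Icc_of_le hj))

/-- The line through `(0, S 0)` of slope `-M` lies below the data, as `M` dominates every
`|S k - S 0|`; `apply_last` is the mirror image. -/
theorem apply_zero (h : IsGreatestConvexMinorant K S f) : f 0 = S 0 := by
  set M := ∑ n ∈ range (K + 1), |S n - S 0|
  have hM : 0 ≤ M := sum_nonneg fun n _ => abs_nonneg _
  refine mod_cast h.apply_eq_of_affine_le (a := -M) (b := S 0) (fun k hk => ?_) K.zero_le
    (by simp)
  rcases Nat.eq_zero_or_pos k with rfl | hk1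
  · simp
  · have hk1 : (1 : ℝ) ≤ k := by exact_mod_cast hk1
    have := abs_sub_le_sum_range S hk 0
    nlinarith [neg_abs_le (S k - S 0)]

theorem apply_last (h : IsGreatestConvexMinorant K S f) : f K = S K := by
  set M := ∑ n ∈ range (K + 1), |S n - S K|
  have hM : 0 ≤ M := sum_nonneg fun n _ => abs_nonneg _
  refine h.apply_eq_of_affine_le (a := M) (b := S K - M * K) (fun k hk => ?_) le_rfl (by ring)
  rcases hk.eq_or_lt with rfl | hkK
  · simp
  · have hkK : (k : ℝ) + 1 ≤ K := by exact_mod_cast hkK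
    have := abs_sub_le_sum_range S hk K
    nlinarith [neg_abs_le (S k - S K)]

theorem sub_le_sub_succ (h : IsGreatestConvexMinorant K S f) {j : ℕ} (hj : 1 ≤ j) (hjK : j < K) :
    f j - f (j - 1) ≤ f (j + 1) - f j := by
  have hj : (1 : ℝ) ≤ j := by exact_mod_cast hj
  have hjK : (j : ℝ) + 1 ≤ K := by exact_mod_cast hjK
  exact h.convexOn.apply_sub_apply_sub_one_le ⟨by linarith, by linarith⟩ ⟨by linarith, hjK⟩

theorem le_sub_of_affine_le (h : IsGreatestConvexMinorant K S f) {a : ℝ}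
    (ha : ∀ k : ℕ, k ≤ K → a * k + S 0 ≤ S k) {k : ℕ} (hk : 1 ≤ k) (hkK : k ≤ K) :
    a ≤ f k - f (k - 1) := by
  induction k, hk using Nat.le_induction with
  | base =>
    have := h.affine_le ha 1 (mod_cast Nat.cast_mem_Icc_of_le hkK)
    rw [Nat.cast_one, sub_self, h.apply_zero]
    linarith
  | succ n hn ih =>
    have := h.sub_le_sub_succ hn hkK
    push_cast
    rw [add_sub_cancel_right]
    linarith [ih (by omega)]

/-- Where `f` stays strictly below the data it is affine: otherwise the chord through
`j - 1` and `j + 1`, lowered until it passes below `S j`, would be a larger convex minorant. -/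
theorem sub_eq_of_lt (h : IsGreatestConvexMinorant K S f) {j : ℕ} (hj : 1 ≤ j) (hjK : j < K)
    (hlt : f j < S j) : f (j + 1) - f j = f j - f (j - 1) := by
  have hj' : (1 : ℝ) ≤ j := by exact_mod_cast hj
  have hjK' : (j : ℝ) + 1 ≤ K := by exact_mod_cast hjK
  set a := (f (j + 1) - f (j - 1)) / 2
  set c := f (j - 1) + a
  have hchord : ∀ x ∈ Set.Icc 0 (K : ℝ), a * x + (min (S j) c - a * j) ≤ f x := by
    refine h.affine_le fun n hn => ?_
    rcases eq_or_ne n j with rfl | hnj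
    · linarith [min_le_left (S n) c]
    · have hnj : (n : ℝ) ∉ Set.Ioo ((j : ℝ) - 1) (j + 1) := by
        rintro ⟨h₁, h₂⟩
        have : j < n + 1 := by exact_mod_cast (by linarith : (j : ℝ) < n + 1)
        have : n < j + 1 := by exact_mod_cast h₂
        omega
      have hsec := h.convexOn.secant_le_of_notMem_Ioo ⟨by linarith, by linarith⟩
        ⟨by linarith, hjK'⟩ (Nat.cast_mem_Icc_of_le hn) (by linarith) hnj
      rw [show (j : ℝ) + 1 - (j - 1) = 2 by ring] at hsec
      change f (j - 1) + a * (n - (j - 1)) ≤ f n at hsec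
      linarith [min_le_right (S j) c, h.le_data n hn, show c = f (j - 1) + a from rfl]
  have hc : c ≤ f j := by
    have := hchord j (Nat.cast_mem_Icc_of_le hjK.le)
    rcases min_le_iff.1 (by linarith : min (S j) c ≤ f j) with hS | hc
    · exact absurd hS (not_le.2 hlt)
    · exact hc
  simp only [c, a] at hc
  linarith [h.sub_le_sub_succ hj hjK]

end IsGreatestConvexMinorant

theorem exists_pos_mul_le_sum_Icc {K : ℕ} {s : ℕ → ℝ} (hs : ∀ k, 1 ≤ k → k ≤ K → 0 < s k) :
    ∃ m > 0, ∀ k ≤ K, m * k ≤ ∑ i ∈ Icc 1 k, s i := by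
  obtain ⟨m, hm, hms⟩ : ∃ m > 0, ∀ i ∈ Icc 1 K, m ≤ s i := by
    rcases (Icc 1 K).eq_empty_or_nonempty with he | hne
    · exact ⟨1, one_pos, by simp [he]⟩
    · obtain ⟨i, hi, hmin⟩ := (Icc 1 K).exists_min_image s hne
      exact ⟨s i, hs i (mem_Icc.1 hi).1 (mem_Icc.1 hi).2, hmin⟩
  refine ⟨m, hm, fun k hk => ?_⟩
  simpa [mul_comm] using card_nsmul_le_sum (Icc 1 k) s m
    fun i hi => hms i (Icc_subset_Icc_right hk hi)

/-- The summand `Φ(μ) - μ s` of the objective, `Φ(μ) = -log(-μ)`. -/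
noncomputable def negLogLoss (s μ : ℝ) : ℝ := -Real.log (-μ) - μ * s

/-- Tangent line inequality: `-1 / μ₀ - s` is the derivative of `negLogLoss s` at `μ₀`. -/
theorem negLogLoss_add_mul_le {s μ₀ μ : ℝ} (hμ₀ : μ₀ < 0) (hμ : μ < 0) :
    negLogLoss s μ₀ + (-1 / μ₀ - s) * (μ - μ₀) ≤ negLogLoss s μ := by
  have hlog := Real.log_le_sub_one_of_pos (div_pos_of_neg_of_neg hμ hμ₀)
  rw [Real.log_div hμ.ne hμ₀.ne] at hlog
  have hlin : (-1 / μ₀ - s) * (μ - μ₀) = 1 - μ / μ₀ - s * μ + s * μ₀ := by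
    field_simp [hμ₀.ne]
    ring
  simp only [negLogLoss, Real.log_neg_eq_log]
  linarith

theorem sum_Icc_sub_mul_eq {D : ℕ → ℝ} (hD0 : D 0 = 0) (ν : ℕ → ℝ) (n : ℕ) :
    ∑ k ∈ Icc 1 n, (D k - D (k - 1)) * ν k =
      D n * ν n - ∑ k ∈ range n, D k * (ν (k + 1) - ν k) := by
  induction n with
  | zero => simp [hD0]
  | succ n ih =>
    rw [sum_Icc_succ_top (by omega), ih, sum_range_succ, Nat.add_sub_cancel]
    ring

/-- Karush–Kuhn–Tucker sufficiency: `D` is the partial sum of the gradient at `μ₀`, and `-D k` is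
a nonnegative multiplier of `μ k ≤ μ (k + 1)` that vanishes unless this constraint is active. -/
theorem sum_negLogLoss_le_of_kkt {K : ℕ} {s μ₀ D : ℕ → ℝ}
    (hμ₀ : ∀ k, 1 ≤ k → k ≤ K → μ₀ k < 0)
    (hD : ∀ k, 1 ≤ k → k ≤ K → D k - D (k - 1) = -1 / μ₀ k - s k)
    (hD0 : D 0 = 0) (hDK : D K = 0) (hD_nonpos : ∀ k, 1 ≤ k → k < K → D k ≤ 0)
    (hslack : ∀ k, 1 ≤ k → k < K → D k < 0 → μ₀ (k + 1) = μ₀ k)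
    {μ : ℕ → ℝ} (hmono : ∀ k, 1 ≤ k → k < K → μ k ≤ μ (k + 1))
    (hneg : ∀ k, 1 ≤ k → k ≤ K → μ k < 0) :
    ∑ k ∈ Icc 1 K, negLogLoss (s k) (μ₀ k) ≤ ∑ k ∈ Icc 1 K, negLogLoss (s k) (μ k) := by
  have htangent : ∀ k ∈ Icc 1 K, negLogLoss (s k) (μ₀ k) + (D k - D (k - 1)) * (μ k - μ₀ k)
      ≤ negLogLoss (s k) (μ k) := by
    intro k hk
    obtain ⟨hk1, hkK⟩ := mem_Icc.1 hk
    rw [hD k hk1 hkK]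
    exact negLogLoss_add_mul_le (hμ₀ k hk1 hkK) (hneg k hk1 hkK)
  have hterm : ∀ k ∈ range K, D k * ((μ (k + 1) - μ₀ (k + 1)) - (μ k - μ₀ k)) ≤ 0 := by
    intro k hk
    rcases Nat.eq_zero_or_pos k with rfl | hk1
    · simp [hD0]
    have hkK := mem_range.1 hk
    rcases (hD_nonpos k hk1 hkK).lt_or_eq with hlt | heq
    · rw [hslack k hk1 hkK hlt]
      nlinarith [hmono k hk1 hkK]
    · simp [heq]
  have habel : 0 ≤ ∑ k ∈ Icc 1 K, (D k - D (k - 1)) * (μ k - μ₀ k) := by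
    rw [sum_Icc_sub_mul_eq hD0, hDK, zero_mul, zero_sub, neg_nonneg]
    exact sum_nonpos hterm
  calc ∑ k ∈ Icc 1 K, negLogLoss (s k) (μ₀ k)
      ≤ ∑ k ∈ Icc 1 K, (negLogLoss (s k) (μ₀ k) + (D k - D (k - 1)) * (μ k - μ₀ k)) := by
        rw [sum_add_distrib]
        linarith
    _ ≤ ∑ k ∈ Icc 1 K, negLogLoss (s k) (μ k) := sum_le_sum htangent

theorem stmt_3_general (K : ℕ) (s : ℕ → ℝ) (hs : ∀ k, 1 ≤ k → k ≤ K → 0 < s k)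
    (S : ℕ → ℝ) (hS : ∀ k, S k = ∑ i ∈ Finset.Icc 1 k, s i)
    (Sbar : ℝ → ℝ)
    (hconv : ConvexOn ℝ (Set.Icc (0 : ℝ) (K : ℝ)) Sbar)
    (hbelow : ∀ k : ℕ, k ≤ K → Sbar (k : ℝ) ≤ S k)
    (hgreatest : ∀ g : ℝ → ℝ, ConvexOn ℝ (Set.Icc (0 : ℝ) (K : ℝ)) g →
      (∀ k : ℕ, k ≤ K → g (k : ℝ) ≤ S k) → ∀ x ∈ Set.Icc (0 : ℝ) (K : ℝ), g x ≤ Sbar x) :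
    (∀ k : ℕ, 1 ≤ k → k ≤ K → 0 < Sbar (k : ℝ) - Sbar ((k : ℝ) - 1)) ∧
    (∀ k : ℕ, 1 ≤ k → k < K →
      -(1 / (Sbar (k : ℝ) - Sbar ((k : ℝ) - 1)))
        ≤ -(1 / (Sbar ((k + 1 : ℕ) : ℝ) - Sbar (((k + 1 : ℕ) : ℝ) - 1)))) ∧
    (∀ k : ℕ, 1 ≤ k → k ≤ K → -(1 / (Sbar (k : ℝ) - Sbar ((k : ℝ) - 1))) < 0) ∧
    ∀ μ : ℕ → ℝ, (∀ k, 1 ≤ k → k < K → μ k ≤ μ (k + 1)) →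
      (∀ k, 1 ≤ k → k ≤ K → μ k < 0) →
      ∑ k ∈ Finset.Icc 1 K,
          (-Real.log (-(-(1 / (Sbar (k : ℝ) - Sbar ((k : ℝ) - 1)))))
            - (-(1 / (Sbar (k : ℝ) - Sbar ((k : ℝ) - 1)))) * s k)
        ≤ ∑ k ∈ Finset.Icc 1 K, (-Real.log (-μ k) - μ k * s k) := by
  have G : IsGreatestConvexMinorant K S Sbar := ⟨hconv, hbelow, hgreatest⟩
  have hS0 : S 0 = 0 := by simp [hS]
  have hstep : ∀ k, 1 ≤ k → S k - S (k - 1) = s k := by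
    intro k hk
    obtain ⟨n, rfl⟩ := Nat.exists_eq_add_of_le' hk
    rw [hS, hS, Nat.add_sub_cancel, sum_Icc_succ_top (by omega), add_sub_cancel_left]
  obtain ⟨m, hm, hmS⟩ := exists_pos_mul_le_sum_Icc hs
  have hinc : ∀ k : ℕ, 1 ≤ k → k ≤ K → 0 < Sbar k - Sbar (k - 1) := fun k hk hkK =>
    hm.trans_le <| G.le_sub_of_affine_le (fun n hn => by rw [hS0, add_zero, hS]; exact hmS n hn)
      hk hkK
  have hsucc : ∀ k : ℕ, ((k + 1 : ℕ) : ℝ) - 1 = k := by simp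
  refine ⟨hinc, fun k hk hkK => ?_, fun k hk hkK => by simpa using hinc k hk hkK,
    fun μ hmono hneg => ?_⟩
  · rw [hsucc, Nat.cast_succ]
    exact neg_le_neg (one_div_le_one_div_of_le (hinc k hk hkK.le) (G.sub_le_sub_succ hk hkK))
  · refine sum_negLogLoss_le_of_kkt (D := fun k => Sbar k - S k)
      (fun k hk hkK => by simpa using hinc k hk hkK) (fun k hk hkK => ?_)
      (by simp [G.apply_zero]) (by simp [G.apply_last])
      (fun k _ hkK => sub_nonpos.2 (hbelow k hkK.le)) (fun k hk hkK hlt => ?_) hmono hneg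
    · rw [Nat.cast_sub hk, Nat.cast_one, neg_div_neg_eq, one_div_one_div, ← hstep k hk]
      ring
    · rw [hsucc, Nat.cast_succ, G.sub_eq_of_lt hk hkK (sub_neg.1 hlt)]

/-- Greatest convex minorant / PAVA characterization of the isotonic
problem with `Φ(μ) = -log(-μ)`: with `S k = s₁ + ⋯ + s_k` (all `s k > 0`) and `Sbar`
the greatest convex minorant on `[0, K]` of the points `(k, S k)`, the increments
`Sbar k - Sbar (k-1)` are positive and `μ̂ k = -1/(Sbar k - Sbar (k-1))` minimizes
`∑_{k=1}^K (-log (-μ k) - μ k * s k)` over `μ₁ ≤ ⋯ ≤ μ_K < 0`. -/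
theorem stmt_3 (K : ℕ) (hK : 1 ≤ K) (s : ℕ → ℝ) (hs : ∀ k, 1 ≤ k → k ≤ K → 0 < s k)
    (S : ℕ → ℝ) (hS : ∀ k, S k = ∑ i ∈ Finset.Icc 1 k, s i)
    (Sbar : ℝ → ℝ)
    (hconv : ConvexOn ℝ (Set.Icc (0 : ℝ) (K : ℝ)) Sbar)
    (hbelow : ∀ k : ℕ, k ≤ K → Sbar (k : ℝ) ≤ S k)
    (hgreatest : ∀ g : ℝ → ℝ, ConvexOn ℝ (Set.Icc (0 : ℝ) (K : ℝ)) g →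
      (∀ k : ℕ, k ≤ K → g (k : ℝ) ≤ S k) → ∀ x ∈ Set.Icc (0 : ℝ) (K : ℝ), g x ≤ Sbar x) :
    (∀ k : ℕ, 1 ≤ k → k ≤ K → 0 < Sbar (k : ℝ) - Sbar ((k : ℝ) - 1)) ∧
    (∀ k : ℕ, 1 ≤ k → k < K →
      -(1 / (Sbar (k : ℝ) - Sbar ((k : ℝ) - 1)))
        ≤ -(1 / (Sbar ((k + 1 : ℕ) : ℝ) - Sbar (((k + 1 : ℕ) : ℝ) - 1)))) ∧
    (∀ k : ℕ, 1 ≤ k → k ≤ K → -(1 / (Sbar (k : ℝ) - Sbar ((k : ℝ) - 1))) < 0) ∧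
    ∀ μ : ℕ → ℝ, (∀ k, 1 ≤ k → k < K → μ k ≤ μ (k + 1)) →
      (∀ k, 1 ≤ k → k ≤ K → μ k < 0) →
      ∑ k ∈ Finset.Icc 1 K,
          (-Real.log (-(-(1 / (Sbar (k : ℝ) - Sbar ((k : ℝ) - 1)))))
            - (-(1 / (Sbar (k : ℝ) - Sbar ((k : ℝ) - 1)))) * s k)
        ≤ ∑ k ∈ Finset.Icc 1 K, (-Real.log (-μ k) - μ k * s k) :=
  stmt_3_general K s hs S hS Sbar hconv hbelow hgreatest
end

section
/- Let S : ℝ^{M₁} × ℝ^{M₂} → ℝ be bilinear and let f₁ : ℝ^{M₁} × ℝ^{M₂} × ℝ → ℝ^{M₁}, f₂ : ℝ^{M₁} × ℝ^{M₂} × ℝ → ℝ^{M₂} satisfy S(f₁(x,z,t), z) + S(x, f₂(x,z,t)) = 0 for all x ∈ ℝ^{M₁}, z ∈ ℝ^{M₂}, t ∈ ℝ. Let (a_{ij}, b_i, c_i) and (A_{ij}, B_i, C_i), i,j = 1,…,s, be partitioned Runge–Kutta coefficients satisfying b_i = B_i for all i, b_i A_{ij} + B_j a_{ji} = b_i B_j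 for all i,j, and c_i = C_i for all i. Fix a step size h > 0, a time t_n ∈ ℝ, points x_n ∈ ℝ^{M₁}, z_n ∈ ℝ^{M₂}, and suppose internal stages X_i, Z_i, k_i, l_i (i = 1,…,s) satisfy k_i = f₁(X_i, Z_i, t_n + c_i h), l_i = f₂(X_i, Z_i, t_n + C_i h), X_i = x_n + h ∑_{j=1}^s a_{ij} k_j, Z_i = z_n + h ∑_{j=1}^s A_{ij} l_j, and define x_{n+1} = x_n + h ∑_{i=1}^s b_i k_i, z_{n+1} = z_n + h ∑_{i=1}^s B_i l_i. Then S(x_{n+1}, z_{n+1}) = S(x_n, z_n). -/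
/-- Conservation of bilinear invariants by symplectic partitioned
Runge–Kutta methods: if the bilinear map `S` is conserved along solutions of the
coupled system (`S (f₁ x z t) z + S x (f₂ x z t) = 0`) and the PRK coefficients
satisfy the symplecticity conditions `b i = B i`, `b i * A i j + B j * a j i = b i * B j`
and `c i = C i`, then one PRK step preserves `S`. -/
theorem stmt_4 (M₁ M₂ s : ℕ) (hs : 1 ≤ s)
    (S : (Fin M₁ → ℝ) →ₗ[ℝ] (Fin M₂ → ℝ) →ₗ[ℝ] ℝ)
    (f₁ : (Fin M₁ → ℝ) → (Fin M₂ → ℝ) → ℝ → (Fin M₁ → ℝ))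
    (f₂ : (Fin M₁ → ℝ) → (Fin M₂ → ℝ) → ℝ → (Fin M₂ → ℝ))
    (hcons : ∀ x z t, S (f₁ x z t) z + S x (f₂ x z t) = 0)
    (a A : Fin s → Fin s → ℝ) (b B c C : Fin s → ℝ)
    (hbB : ∀ i, b i = B i)
    (hsymp : ∀ i j, b i * A i j + B j * a j i = b i * B j)
    (hcC : ∀ i, c i = C i)
    (h : ℝ) (hh : 0 < h) (tn : ℝ) (xn : Fin M₁ → ℝ) (zn : Fin M₂ → ℝ)
    (X : Fin s → Fin M₁ → ℝ) (Z : Fin s → Fin M₂ → ℝ)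
    (k : Fin s → Fin M₁ → ℝ) (l : Fin s → Fin M₂ → ℝ)
    (hk : ∀ i, k i = f₁ (X i) (Z i) (tn + c i * h))
    (hl : ∀ i, l i = f₂ (X i) (Z i) (tn + C i * h))
    (hX : ∀ i, X i = xn + h • ∑ j, a i j • k j)
    (hZ : ∀ i, Z i = zn + h • ∑ j, A i j • l j) :
    S (xn + h • ∑ i, b i • k i) (zn + h • ∑ i, B i • l i) = S xn zn := by
  -- linearity expansions
  have hxlin : ∀ u : Fin M₂ → ℝ, S (xn + h • ∑ i, b i • k i) u
      = S xn u + h * ∑ i, b i * S (k i) u := by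
    intro u
    simp only [map_add, map_smul, map_sum, LinearMap.add_apply, LinearMap.smul_apply,
      LinearMap.sum_apply, smul_eq_mul, Finset.mul_sum]
  have hzlin : ∀ v : Fin M₁ → ℝ, S v (zn + h • ∑ i, B i • l i)
      = S v zn + h * ∑ i, B i * S v (l i) := by
    intro v
    simp only [map_add, map_smul, map_sum, smul_eq_mul, Finset.mul_sum]
  have key1 : ∀ i, S (k i) zn
      = S (k i) (Z i) - h * ∑ j, A i j * S (k i) (l j) := by
    intro i
    have : S (k i) (Z i) = S (k i) zn + h * ∑ j, A i j * S (k i) (l j) := by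
      conv_lhs => rw [hZ i]
      simp [map_add, map_smul, map_sum, smul_eq_mul, Finset.mul_sum]
    linarith
  have key2 : ∀ i, S xn (l i)
      = S (X i) (l i) - h * ∑ j, a i j * S (k j) (l i) := by
    intro i
    have : S (X i) (l i) = S xn (l i) + h * ∑ j, a i j * S (k j) (l i) := by
      conv_lhs => rw [hX i]
      simp [map_add, map_smul, map_sum, smul_eq_mul, Finset.mul_sum,
        LinearMap.add_apply, LinearMap.smul_apply, LinearMap.sum_apply]
    linarith
  have key3 : ∀ i, b i * S (k i) (Z i) + B i * S (X i) (l i) = 0 := by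
    intro i
    have h0 := hcons (X i) (Z i) (tn + c i * h)
    rw [hk i, hl i, ← hcC, ← hbB]
    linear_combination (b i) * h0
  -- named sums
  have E1 : ∑ i, b i * S (k i) zn
      = ∑ i, b i * S (k i) (Z i) - h * ∑ i, ∑ j, b i * A i j * S (k i) (l j) := by
    rw [Finset.mul_sum, ← Finset.sum_sub_distrib]
    refine Finset.sum_congr rfl fun i _ => ?_
    rw [key1 i, mul_sub]
    congr 1
    simp only [Finset.mul_sum]
    exact Finset.sum_congr rfl fun j _ => by ring
  have E2 : ∑ i, B i * S xn (l i)
      = ∑ i, B i * S (X i) (l i) - h * ∑ i, ∑ j, B j * a j i * S (k i) (l j) := by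
    have swap : ∑ i, ∑ j, B j * a j i * S (k i) (l j)
        = ∑ i, ∑ j, B i * a i j * S (k j) (l i) := Finset.sum_comm
    rw [swap, Finset.mul_sum, ← Finset.sum_sub_distrib]
    refine Finset.sum_congr rfl fun i _ => ?_
    rw [key2 i, mul_sub]
    congr 1
    simp only [Finset.mul_sum]
    exact Finset.sum_congr rfl fun j _ => by ring
  have E3 : ∑ i, b i * S (k i) (Z i) + ∑ i, B i * S (X i) (l i) = 0 := by
    rw [← Finset.sum_add_distrib]
    simp [key3]
  have E5 : ∑ i, ∑ j, b i * B j * S (k i) (l j)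
      = ∑ i, ∑ j, b i * A i j * S (k i) (l j)
        + ∑ i, ∑ j, B j * a j i * S (k i) (l j) := by
    rw [← Finset.sum_add_distrib]
    refine Finset.sum_congr rfl fun i _ => ?_
    rw [← Finset.sum_add_distrib]
    refine Finset.sum_congr rfl fun j _ => ?_
    linear_combination (-(S (k i) (l j))) * (hsymp i j)
  -- expand the goal and split the nested sum
  rw [hzlin, hxlin]
  simp only [hxlin]
  have Esplit : ∑ i, B i * (S xn (l i) + h * ∑ j, b j * S (k j) (l i))
      = ∑ i, B i * S xn (l i) + h * ∑ i, ∑ j, b i * B j * S (k i) (l j) := by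
    have swap : ∑ i, ∑ j, b i * B j * S (k i) (l j)
        = ∑ i, ∑ j, b j * B i * S (k j) (l i) := Finset.sum_comm
    rw [swap, Finset.mul_sum, ← Finset.sum_add_distrib]
    refine Finset.sum_congr rfl fun i _ => ?_
    rw [mul_add]
    congr 1
    simp only [Finset.mul_sum]
    exact Finset.sum_congr rfl fun j _ => by ring
  rw [Esplit]
  linear_combination h * E1 + h * E2 + h * E3 + h ^ 2 * E5
end

section
/- Let M, M̃ ∈ ℝ^{2×2}, θ ∈ ℝ², K ≥ 1, γ > 0, with G := ∑_{k=1}^K (M̃^k)^⊤ M̃^k invertible. Let r₁,…,r_K be independent square-integrable random vectors in ℝ², each with mean zero and covariance matrix γ² I₂, and set y_k = M^k θ + r_k and θ̂ = G^{-1} ∑_{k=1}^K (M̃^k)^⊤ y_k. Then E[θ̂] = θ + b and E[‖θ̂ − θ‖²] = ‖b‖² + γ² tr(G^{-1}), where b = G^{-1} ∑_{k=1}^K (M̃^k)^⊤ (M^k − M̃^k) θ. -/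
/-!
Substituting `y_k = M^k θ + r_k` and splitting `M^k = (M^k - M̃^k) + M̃^k` gives
`θ̂ = θ + b + ∑_k A_k r_k` with `A_k = G⁻¹ (M̃^k)ᵀ`. Flattened into the scalar family
`(r_k)_j`, the noise is white: independence, zero mean and covariance `γ² I` make
`E[(r_k)_j (r_l)_j'] = γ² δ_{(k,j),(l,j')}`. Hence the noise term has mean zero and
coordinate `i` of it has second moment `γ² ∑_{k,j} (A_k)_{ij}²`; summed over `i` this is
`γ² tr ∑_k A_k A_kᵀ = γ² tr (G⁻¹ G G⁻ᵀ) = γ² tr G⁻¹`.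
-/

open Matrix MeasureTheory ProbabilityTheory

section WhiteNoise

variable {Ω ι : Type*} [MeasurableSpace Ω] {μ : Measure Ω} [Fintype ι] {X : Ω → ι → ℝ}

lemma memLp_sum_mul (hX : ∀ p, MemLp (fun ω => X ω p) 2 μ) (a : ι → ℝ) :
    MemLp (fun ω => ∑ p, a p * X ω p) 2 μ :=
  memLp_finsetSum _ fun p _ => (hX p).const_mul (a p)

lemma integral_sum_mul_eq_zero (hX : ∀ p, Integrable (fun ω => X ω p) μ)
    (hmean : ∀ p, ∫ ω, X ω p ∂μ = 0) (a : ι → ℝ) :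
    ∫ ω, ∑ p, a p * X ω p ∂μ = 0 := by
  rw [integral_finsetSum _ fun p _ => (hX p).const_mul (a p)]
  simp [integral_const_mul, hmean]

lemma integral_sq_sum_mul [DecidableEq ι] {σ2 : ℝ} (hX : ∀ p, MemLp (fun ω => X ω p) 2 μ)
    (horth : ∀ p q, ∫ ω, X ω p * X ω q ∂μ = if p = q then σ2 else 0) (a : ι → ℝ) :
    ∫ ω, (∑ p, a p * X ω p) ^ 2 ∂μ = σ2 * ∑ p, a p ^ 2 := by
  have hint : ∀ p q, Integrable (fun ω => a p * a q * (X ω p * X ω q)) μ := fun p q =>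
    ((hX p).integrable_mul (hX q)).const_mul (a p * a q)
  calc ∫ ω, (∑ p, a p * X ω p) ^ 2 ∂μ
      = ∫ ω, ∑ p, ∑ q, a p * a q * (X ω p * X ω q) ∂μ := by
        congr 1 with ω
        rw [sq, Finset.sum_mul_sum]
        exact Finset.sum_congr rfl fun p _ => Finset.sum_congr rfl fun q _ => by ring
    _ = ∑ p, ∑ q, a p * a q * (if p = q then σ2 else 0) := by
        rw [integral_finsetSum _ fun p _ => integrable_finsetSum _ fun q _ => hint p q]
        refine Finset.sum_congr rfl fun p _ => ?_
        rw [integral_finsetSum _ fun q _ => hint p q]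
        simp only [integral_const_mul, horth]
    _ = σ2 * ∑ p, a p ^ 2 := by
        simp [Finset.mul_sum, sq, mul_comm]

lemma integral_sq_const_add_sum_mul [DecidableEq ι] [IsProbabilityMeasure μ] {σ2 : ℝ}
    (hX : ∀ p, MemLp (fun ω => X ω p) 2 μ) (hmean : ∀ p, ∫ ω, X ω p ∂μ = 0)
    (horth : ∀ p q, ∫ ω, X ω p * X ω q ∂μ = if p = q then σ2 else 0) (c : ℝ) (a : ι → ℝ) :
    ∫ ω, (c + ∑ p, a p * X ω p) ^ 2 ∂μ = c ^ 2 + σ2 * ∑ p, a p ^ 2 := by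
  have hS := memLp_sum_mul hX a
  have hlin : Integrable (fun ω => 2 * c * ∑ p, a p * X ω p) μ :=
    (hS.integrable one_le_two).const_mul _
  have haffine : Integrable (fun ω => c ^ 2 + 2 * c * ∑ p, a p * X ω p) μ :=
    (integrable_const _).add hlin
  calc ∫ ω, (c + ∑ p, a p * X ω p) ^ 2 ∂μ
      = ∫ ω, c ^ 2 + 2 * c * ∑ p, a p * X ω p + (∑ p, a p * X ω p) ^ 2 ∂μ := by
        congr 1 with ω; ring
    _ = c ^ 2 + σ2 * ∑ p, a p ^ 2 := by
        rw [integral_add haffine hS.integrable_sq,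
          integral_add (integrable_const _) hlin, integral_const_mul,
          integral_sum_mul_eq_zero (fun p => (hX p).integrable one_le_two) hmean,
          integral_sq_sum_mul hX horth]
        simp

end WhiteNoise

lemma integral_mul_eq_ite_of_iIndepFun {Ω ι n : Type*} [MeasurableSpace Ω] {μ : Measure Ω}
    [DecidableEq ι] [DecidableEq n] {r : ι → Ω → n → ℝ} {γ : ℝ} (hindep : iIndepFun r μ)
    (hL2 : ∀ k i, MemLp (fun ω => r k ω i) 2 μ) (hmean : ∀ k i, ∫ ω, r k ω i ∂μ = 0)
    (hcov : ∀ k i j, ∫ ω, r k ω i * r k ω j ∂μ = if i = j then γ ^ 2 else 0)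
    (p q : ι × n) :
    ∫ ω, r p.1 ω p.2 * r q.1 ω q.2 ∂μ = if p = q then γ ^ 2 else 0 := by
  obtain ⟨k, i⟩ := p
  obtain ⟨l, j⟩ := q
  by_cases hkl : k = l
  · subst hkl
    simp [hcov]
  · have hind : IndepFun (fun ω => r k ω i) (fun ω => r l ω j) μ :=
      (hindep.indepFun hkl).comp (measurable_pi_apply i) (measurable_pi_apply j)
    rw [hind.integral_fun_mul_eq_mul_integral (hL2 k i).1 (hL2 l j).1]
    simp [hmean, hkl]

section LeastSquares

variable {R ι m n : Type*} [CommRing R] [Fintype ι] [Fintype m] [Fintype n] [DecidableEq n]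

lemma inv_mulVec_sum_transpose_mulVec_eq (Φ Ψ : ι → Matrix m n R) (G : Matrix n n R)
    (hG : G = ∑ k, (Φ k)ᵀ * Φ k) (hGu : IsUnit G) (θ : n → R) (r : ι → m → R) :
    G⁻¹ *ᵥ ∑ k, (Φ k)ᵀ *ᵥ (Ψ k *ᵥ θ + r k)
      = θ + G⁻¹ *ᵥ ∑ k, (Φ k)ᵀ *ᵥ ((Ψ k - Φ k) *ᵥ θ) + ∑ k, (G⁻¹ * (Φ k)ᵀ) *ᵥ r k := by
  have hGG : G⁻¹ * G = 1 := nonsing_inv_mul G ((isUnit_iff_isUnit_det G).mp hGu)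
  have hsplit : ∑ k, (Φ k)ᵀ *ᵥ (Ψ k *ᵥ θ + r k)
      = G *ᵥ θ + ∑ k, (Φ k)ᵀ *ᵥ ((Ψ k - Φ k) *ᵥ θ) + ∑ k, (Φ k)ᵀ *ᵥ r k := by
    rw [hG, sum_mulVec, ← Finset.sum_add_distrib, ← Finset.sum_add_distrib]
    refine Finset.sum_congr rfl fun k _ => ?_
    rw [← mulVec_mulVec, ← mulVec_add, ← mulVec_add, sub_mulVec, add_sub_cancel]
  rw [hsplit, mulVec_add, mulVec_add, mulVec_mulVec, hGG, one_mulVec]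
  simp only [mulVec_sum, mulVec_mulVec]

lemma sum_inv_mul_transpose_mul_transpose (Φ : ι → Matrix m n R) (G : Matrix n n R)
    (hG : G = ∑ k, (Φ k)ᵀ * Φ k) (hGu : IsUnit G) :
    ∑ k, (G⁻¹ * (Φ k)ᵀ) * (G⁻¹ * (Φ k)ᵀ)ᵀ = G⁻¹ᵀ := by
  have hGG : G⁻¹ * G = 1 := nonsing_inv_mul G ((isUnit_iff_isUnit_det G).mp hGu)
  calc ∑ k, (G⁻¹ * (Φ k)ᵀ) * (G⁻¹ * (Φ k)ᵀ)ᵀ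
      = G⁻¹ * (∑ k, (Φ k)ᵀ * Φ k) * G⁻¹ᵀ := by
        simp only [transpose_mul, transpose_transpose, Finset.mul_sum, Finset.sum_mul,
          Matrix.mul_assoc]
    _ = G⁻¹ᵀ := by rw [← hG, hGG, Matrix.one_mul]

end LeastSquares

section Coordinates

variable {R ι m n : Type*} [CommSemiring R] [Fintype ι] [Fintype n]

lemma sum_mulVec_apply (A : ι → Matrix m n R) (v : ι → n → R) (i : m) :
    (∑ k, A k *ᵥ v k) i = ∑ p : ι × n, A p.1 i p.2 * v p.1 p.2 := by
  simp [Finset.sum_apply, mulVec, dotProduct, Fintype.sum_prod_type]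

lemma sum_sum_prod_sq_eq_trace [Fintype m] (A : ι → Matrix m n R) :
    ∑ i, ∑ p : ι × n, A p.1 i p.2 ^ 2 = trace (∑ k, A k * (A k)ᵀ) := by
  rw [trace_sum, Finset.sum_comm]
  simp only [trace, diag, mul_apply, transpose_apply, Fintype.sum_prod_type, sq]
  exact Finset.sum_congr rfl fun _ _ => Finset.sum_comm

end Coordinates

theorem stmt_6_general (K : ℕ) (γ : ℝ)
    (M Mt : Matrix (Fin 2) (Fin 2) ℝ) (θ : Fin 2 → ℝ)
    (G : Matrix (Fin 2) (Fin 2) ℝ)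
    (hG : G = ∑ k : Fin K, (Mt ^ ((k : ℕ) + 1))ᵀ * Mt ^ ((k : ℕ) + 1))
    (hGinv : IsUnit G)
    {Ω : Type*} [MeasurableSpace Ω] (μ : Measure Ω) [IsProbabilityMeasure μ]
    (r : Fin K → Ω → Fin 2 → ℝ)
    (hindep : iIndepFun r μ)
    (hL2 : ∀ k i, MemLp (fun ω => r k ω i) 2 μ)
    (hmean : ∀ k i, ∫ ω, r k ω i ∂μ = 0)
    (hcov : ∀ k i j, ∫ ω, r k ω i * r k ω j ∂μ = if i = j then γ ^ 2 else 0)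
    (y : Fin K → Ω → Fin 2 → ℝ)
    (hy : ∀ k ω, y k ω = M ^ ((k : ℕ) + 1) *ᵥ θ + r k ω)
    (θhat : Ω → Fin 2 → ℝ)
    (hθhat : ∀ ω, θhat ω = G⁻¹ *ᵥ ∑ k : Fin K, (Mt ^ ((k : ℕ) + 1))ᵀ *ᵥ y k ω)
    (b : Fin 2 → ℝ)
    (hb : b = G⁻¹ *ᵥ ∑ k : Fin K, (Mt ^ ((k : ℕ) + 1))ᵀ *ᵥ ((M ^ ((k : ℕ) + 1)
      - Mt ^ ((k : ℕ) + 1)) *ᵥ θ)) :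
    (∀ i, ∫ ω, θhat ω i ∂μ = θ i + b i) ∧
    ∫ ω, ∑ i, (θhat ω i - θ i) ^ 2 ∂μ = (∑ i, b i ^ 2) + γ ^ 2 * Matrix.trace G⁻¹ := by
  set A : Fin K → Matrix (Fin 2) (Fin 2) ℝ := fun k => G⁻¹ * (Mt ^ ((k : ℕ) + 1))ᵀ with hA
  clear_value A
  have hdecomp : ∀ ω i,
      θhat ω i = θ i + b i + ∑ p : Fin K × Fin 2, A p.1 i p.2 * r p.1 ω p.2 := by
    intro ω i
    simp only [hθhat, hy, inv_mulVec_sum_transpose_mulVec_eq _ _ G hG hGinv, hb, hA,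
      sum_mulVec_apply, Pi.add_apply]
  have hX : ∀ p : Fin K × Fin 2, MemLp (fun ω => r p.1 ω p.2) 2 μ := fun p => hL2 p.1 p.2
  have horth := integral_mul_eq_ite_of_iIndepFun hindep hL2 hmean hcov
  refine ⟨fun i => ?_, ?_⟩
  · simp only [hdecomp]
    rw [integral_add (integrable_const _)
        ((memLp_sum_mul hX fun p => A p.1 i p.2).integrable one_le_two),
      integral_sum_mul_eq_zero (fun p => (hX p).integrable one_le_two) (fun p => hmean _ _)]
    simp
  · have hsq : ∀ i, Integrable
        (fun ω => (b i + ∑ p : Fin K × Fin 2, A p.1 i p.2 * r p.1 ω p.2) ^ 2) μ :=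
      fun i => ((memLp_const (b i)).add (memLp_sum_mul hX fun p => A p.1 i p.2)).integrable_sq
    simp only [hdecomp, add_assoc, add_sub_cancel_left]
    rw [integral_finsetSum _ fun i _ => hsq i]
    simp only [integral_sq_const_add_sum_mul hX (fun p => hmean _ _) horth]
    rw [Finset.sum_add_distrib, ← Finset.mul_sum, sum_sum_prod_sq_eq_trace, hA,
      sum_inv_mul_transpose_mul_transpose _ G hG hGinv, trace_transpose]

/-- Mean and mean squared error of the quasi-maximum likelihood estimate
for the harmonic oscillator: with `y_k = M^k θ + r_k`, `r_k` independent, square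
integrable, mean zero, covariance `γ² I₂`, and `θ̂ = G⁻¹ ∑_k (M̃^k)ᵀ y_k` where
`G = ∑_{k=1}^K (M̃^k)ᵀ M̃^k` is invertible, we get `E[θ̂] = θ + b` and
`E[‖θ̂ - θ‖²] = ‖b‖² + γ² tr(G⁻¹)` with `b = G⁻¹ ∑_k (M̃^k)ᵀ (M^k - M̃^k) θ`. -/
theorem stmt_6 (K : ℕ) (hK : 1 ≤ K) (γ : ℝ) (hγ : 0 < γ)
    (M Mt : Matrix (Fin 2) (Fin 2) ℝ) (θ : Fin 2 → ℝ)
    (G : Matrix (Fin 2) (Fin 2) ℝ)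
    (hG : G = ∑ k : Fin K, (Mt ^ ((k : ℕ) + 1))ᵀ * Mt ^ ((k : ℕ) + 1))
    (hGinv : IsUnit G)
    {Ω : Type*} [MeasurableSpace Ω] (μ : Measure Ω) [IsProbabilityMeasure μ]
    (r : Fin K → Ω → Fin 2 → ℝ)
    (hmeas : ∀ k, Measurable (r k))
    (hindep : iIndepFun r μ)
    (hL2 : ∀ k i, MemLp (fun ω => r k ω i) 2 μ)
    (hmean : ∀ k i, ∫ ω, r k ω i ∂μ = 0)
    (hcov : ∀ k i j, ∫ ω, r k ω i * r k ω j ∂μ = if i = j then γ ^ 2 else 0)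
    (y : Fin K → Ω → Fin 2 → ℝ)
    (hy : ∀ k ω, y k ω = M ^ ((k : ℕ) + 1) *ᵥ θ + r k ω)
    (θhat : Ω → Fin 2 → ℝ)
    (hθhat : ∀ ω, θhat ω = G⁻¹ *ᵥ ∑ k : Fin K, (Mt ^ ((k : ℕ) + 1))ᵀ *ᵥ y k ω)
    (b : Fin 2 → ℝ)
    (hb : b = G⁻¹ *ᵥ ∑ k : Fin K, (Mt ^ ((k : ℕ) + 1))ᵀ *ᵥ ((M ^ ((k : ℕ) + 1)
      - Mt ^ ((k : ℕ) + 1)) *ᵥ θ)) :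
    (∀ i, ∫ ω, θhat ω i ∂μ = θ i + b i) ∧
    ∫ ω, ∑ i, (θhat ω i - θ i) ^ 2 ∂μ = (∑ i, b i ^ 2) + γ ^ 2 * Matrix.trace G⁻¹ :=
  stmt_6_general K γ M Mt θ G hG hGinv μ r hindep hL2 hmean hcov y hy θhat hθhat b hb
end

section
/- Let f : ℝ^M → ℝ^M be differentiable, let K ≥ 1, let h₀,…,h_{K−1} > 0 be step sizes, and for θ ∈ ℝ^M define the explicit Euler iterates x̃₀(θ) = θ and x̃_{k+1}(θ) = x̃_k(θ) + h_k f(x̃_k(θ)) for k = 0,…,K−1. Let J : ℝ^M → ℝ be differentiable and set R̃(θ) = J(x̃_K(θ)). Fix θ ∈ ℝ^M and define the adjoint iterates λ̃_K = ∇J(x̃_K(θ)) and λ̃_k = λ̃_{k+1} + h_k (Df(x̃_k(θ)))^⊤ λ̃_{k+1} for k = K−1,…,0, where Df denotes the Jacobian matrix of f. Then λ̃₀ = ∇R̃(θ), the gradient of R̃ at θ. -/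
/-!
The tangent map `T_k = Dx̃_k(θ)` obeys the linearized scheme `T_{k+1} = B_k T_k` with
`B_k = 1 + h_k Df(x̃_k(θ))`, while the adjoint scheme reads `λ_k = B_kᵀ λ_{k+1}`. Hence
`λ₀ = (B_{K-1} ⋯ B₀)ᵀ λ_K = (Dx̃_K(θ))ᵀ ∇J(x̃_K(θ))`, which is `∇R̃(θ)` by the chain rule.
-/

/-- Explicit Euler iterates `x̃₀(θ) = θ`, `x̃_{k+1}(θ) = x̃_k(θ) + h_k f(x̃_k(θ))`. -/
noncomputable def eulerIter {E : Type*} [NormedAddCommGroup E] [NormedSpace ℝ E]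
    (f : E → E) (h : ℕ → ℝ) (θ : E) : ℕ → E
  | 0 => θ
  | k + 1 => eulerIter f h θ k + h k • f (eulerIter f h θ k)

open ContinuousLinearMap

section Adjoint

variable {𝕜 E F : Type*} [RCLike 𝕜]
  [NormedAddCommGroup E] [InnerProductSpace 𝕜 E] [CompleteSpace E]
  [NormedAddCommGroup F] [InnerProductSpace 𝕜 F] [CompleteSpace F]

theorem HasGradientAt.comp_hasFDerivAt {φ : F → 𝕜} {g : E → F} {φ' : F} {g' : E →L[𝕜] F}
    {x : E} (hφ : HasGradientAt φ φ' (g x)) (hg : HasFDerivAt g g' x) :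
    HasGradientAt (φ ∘ g) (adjoint g' φ') x := by
  rw [hasGradientAt_iff_hasFDerivAt] at hφ ⊢
  refine (hφ.comp x hg).congr_fderiv ?_
  ext v
  simp [adjoint_inner_left]

theorem eq_adjoint_apply_of_backward_recursion (B T : ℕ → E →L[𝕜] E) (lam : ℕ → E) (K : ℕ)
    (hT₀ : T 0 = .id 𝕜 E) (hT : ∀ k < K, T (k + 1) = B k ∘L T k)
    (hlam : ∀ k < K, lam k = adjoint (B k) (lam (k + 1))) :
    lam 0 = adjoint (T K) (lam K) := by
  suffices ∀ n ≤ K, lam 0 = adjoint (T n) (lam n) from this K le_rfl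
  intro n hn
  induction n with
  | zero => rw [hT₀, adjoint_id]; rfl
  | succ n ih =>
    rw [ih (by omega), hlam n (by omega), hT n (by omega), adjoint_comp]
    rfl

end Adjoint

section Euler

variable {E : Type*} [NormedAddCommGroup E] [NormedSpace ℝ E] {f : E → E}

theorem HasFDerivAt.eulerIter_succ (hf : Differentiable ℝ f) {h : ℕ → ℝ} {θ : E} {k : ℕ}
    {T : E →L[ℝ] E} (hT : HasFDerivAt (fun θ' => eulerIter f h θ' k) T θ) :
    HasFDerivAt (fun θ' => eulerIter f h θ' (k + 1))
      ((.id ℝ E + h k • fderiv ℝ f (eulerIter f h θ k)) ∘L T) θ := by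
  refine (hT.add (((hf _).hasFDerivAt.comp θ hT).const_smul (h k))).congr_fderiv ?_
  rw [add_comp, id_comp, smul_comp]

theorem differentiable_eulerIter (hf : Differentiable ℝ f) (h : ℕ → ℝ) (k : ℕ) :
    Differentiable ℝ (fun θ => eulerIter f h θ k) := by
  induction k with
  | zero => exact differentiable_id
  | succ k ih => exact fun θ => ((ih θ).hasFDerivAt.eulerIter_succ hf).differentiableAt

end Euler

theorem adjoint_recursion_eq_gradient_eulerIter {E : Type*} [NormedAddCommGroup E]
    [InnerProductSpace ℝ E] [CompleteSpace E] {f : E → E} (hf : Differentiable ℝ f) (h : ℕ → ℝ)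
    {J : E → ℝ} (hJ : Differentiable ℝ J) (θ : E) (K : ℕ) {lam : ℕ → E}
    (hlamK : lam K = gradient J (eulerIter f h θ K))
    (hlam : ∀ k < K, lam k = lam (k + 1) +
      h k • adjoint (fderiv ℝ f (eulerIter f h θ k)) (lam (k + 1))) :
    lam 0 = gradient (fun θ' => J (eulerIter f h θ' K)) θ := by
  have hB : ∀ k < K, lam k =
      adjoint (.id ℝ _ + h k • fderiv ℝ f (eulerIter f h θ k)) (lam (k + 1)) := by
    intro k hk
    simp [hlam k hk, adjoint_id]
  have hT : ∀ k < K, fderiv ℝ (fun θ' => eulerIter f h θ' (k + 1)) θ =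
      (.id ℝ _ + h k • fderiv ℝ f (eulerIter f h θ k)) ∘L
        fderiv ℝ (fun θ' => eulerIter f h θ' k) θ :=
    fun k _ => ((differentiable_eulerIter hf h k θ).hasFDerivAt.eulerIter_succ hf).fderiv
  rw [eq_adjoint_apply_of_backward_recursion _ (fun k => fderiv ℝ (fun θ' => eulerIter f h θ' k) θ)
    lam K fderiv_fun_id hT hB, hlamK]
  exact (((hJ _).hasGradientAt.comp_hasFDerivAt
    (differentiable_eulerIter hf h K θ).hasFDerivAt).gradient).symm

theorem stmt_10_general (M K : ℕ)
    (f : EuclideanSpace ℝ (Fin M) → EuclideanSpace ℝ (Fin M))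
    (hf : Differentiable ℝ f)
    (h : ℕ → ℝ)
    (J : EuclideanSpace ℝ (Fin M) → ℝ) (hJ : Differentiable ℝ J)
    (θ : EuclideanSpace ℝ (Fin M))
    (lam : ℕ → EuclideanSpace ℝ (Fin M))
    (hlamK : lam K = gradient J (eulerIter f h θ K))
    (hlam : ∀ k, k < K → lam k = lam (k + 1) +
      h k • (ContinuousLinearMap.adjoint (fderiv ℝ f (eulerIter f h θ k))) (lam (k + 1))) :
    lam 0 = gradient (fun θ' => J (eulerIter f h θ' K)) θ :=
  adjoint_recursion_eq_gradient_eulerIter hf h hJ θ K hlamK hlam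

/-- Discrete adjoint method for the explicit Euler scheme: with
`R̃(θ) = J(x̃_K(θ))`, the backward adjoint recursion
`λ_K = ∇J(x̃_K(θ))`, `λ_k = λ_{k+1} + h_k (Df(x̃_k(θ)))ᵀ λ_{k+1}` yields
`λ₀ = ∇R̃(θ)`. -/
theorem stmt_10 (M K : ℕ) (hK : 1 ≤ K)
    (f : EuclideanSpace ℝ (Fin M) → EuclideanSpace ℝ (Fin M))
    (hf : Differentiable ℝ f)
    (h : ℕ → ℝ) (hh : ∀ k, k < K → 0 < h k)
    (J : EuclideanSpace ℝ (Fin M) → ℝ) (hJ : Differentiable ℝ J)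
    (θ : EuclideanSpace ℝ (Fin M))
    (lam : ℕ → EuclideanSpace ℝ (Fin M))
    (hlamK : lam K = gradient J (eulerIter f h θ K))
    (hlam : ∀ k, k < K → lam k = lam (k + 1) +
      h k • (ContinuousLinearMap.adjoint (fderiv ℝ f (eulerIter f h θ k))) (lam (k + 1))) :
    lam 0 = gradient (fun θ' => J (eulerIter f h θ' K)) θ :=
  stmt_10_general M K f hf h J hJ θ lam hlamK hlam
end

section
/- Let f : ℝ^M → ℝ^M be differentiable, let K ≥ 1, let h₀,…,h_{K−1} > 0, and for θ ∈ ℝ^M define x̃₀(θ) = θ and x̃_{k+1}(θ) = x̃_k(θ) + h_k f(x̃_k(θ)). Let ℓ₁,…,ℓ_K : ℝ^M → ℝ be differentiable and set R̃(θ) = ∑_{k=1}^K ℓ_k(x̃_k(θ)). Fix θ ∈ ℝ^M and define backwards: λ̃_K = ∇ℓ_K(x̃_K(θ)); for k = K−1,…,1, λ̃_k = λ̃_{k+1} + h_k (Df(x̃_k(θ)))^⊤ λ̃_{k+1} + ∇ℓ_k(x̃_k(θ)); and λ̃₀ = λ̃₁ + h₀ (Df(x̃₀(θ)))^⊤ λ̃₁.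 Then λ̃₀ = ∇R̃(θ). -/
open ContinuousLinearMap InnerProductSpace

section Gradient

variable {𝕜 E F : Type*} [RCLike 𝕜]
  [NormedAddCommGroup E] [InnerProductSpace 𝕜 E] [CompleteSpace E]
  [NormedAddCommGroup F] [InnerProductSpace 𝕜 F] [CompleteSpace F]

theorem HasGradientAt.comp_hasFDerivAt_s11 {ℓ : F → 𝕜} {g : F} {u : E → F} {L : E →L[𝕜] F} {x : E}
    (hℓ : HasGradientAt ℓ g (u x)) (hu : HasFDerivAt u L x) :
    HasGradientAt (fun y => ℓ (u y)) (adjoint L g) x := by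
  rw [hasGradientAt_iff_hasFDerivAt] at hℓ ⊢
  have hdual : toDual 𝕜 E (adjoint L g) = (toDual 𝕜 F g).comp L := by
    ext v
    simp [adjoint_inner_left]
  rw [hdual]
  exact hℓ.comp x hu

theorem HasGradientAt.sum {ι : Type*} {s : Finset ι} {ℓ : ι → E → 𝕜} {g : ι → E} {x : E}
    (hℓ : ∀ i ∈ s, HasGradientAt (ℓ i) (g i) x) :
    HasGradientAt (fun y => ∑ i ∈ s, ℓ i y) (∑ i ∈ s, g i) x := by
  rw [hasGradientAt_iff_hasFDerivAt, map_sum]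
  exact HasFDerivAt.fun_sum fun i hi => hasGradientAt_iff_hasFDerivAt.mp (hℓ i hi)

end Gradient

section EulerIterDeriv

variable {E : Type*} [NormedAddCommGroup E] [NormedSpace ℝ E] (f : E → E) (h : ℕ → ℝ) (θ : E)

noncomputable def eulerIterDeriv : ℕ → E →L[ℝ] E
  | 0 => .id ℝ E
  | k + 1 => (.id ℝ E + h k • fderiv ℝ f (eulerIter f h θ k)) ∘L eulerIterDeriv k

variable {f}

theorem hasFDerivAt_eulerIter (hf : Differentiable ℝ f) (k : ℕ) :
    HasFDerivAt (fun θ' => eulerIter f h θ' k) (eulerIterDeriv f h θ k) θ := by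
  induction k with
  | zero => exact hasFDerivAt_id θ
  | succ k ih =>
    have hderiv : eulerIterDeriv f h θ (k + 1) = eulerIterDeriv f h θ k +
        h k • (fderiv ℝ f (eulerIter f h θ k) ∘L eulerIterDeriv f h θ k) := by
      ext v
      simp [eulerIterDeriv]
    rw [hderiv]
    exact ih.add (((hf _).hasFDerivAt.comp θ ih).const_smul (h k))

end EulerIterDeriv

section Adjoint

variable {E : Type*} [NormedAddCommGroup E] [InnerProductSpace ℝ E] [CompleteSpace E]
  {f : E → E} (h : ℕ → ℝ) (θ : E)

theorem adjoint_eulerIterDeriv_succ_apply (k : ℕ) (v : E) :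
    adjoint (eulerIterDeriv f h θ (k + 1)) v = adjoint (eulerIterDeriv f h θ k)
      (v + h k • adjoint (fderiv ℝ f (eulerIter f h θ k)) v) := by
  simp [eulerIterDeriv, adjoint_comp, map_add, map_smul]

theorem adjoint_eulerIterDeriv_apply_eq_sum {K : ℕ} {g lam : ℕ → E} (hlamK : lam K = g K)
    (hlam : ∀ k, 1 ≤ k → k < K → lam k = lam (k + 1) +
      h k • adjoint (fderiv ℝ f (eulerIter f h θ k)) (lam (k + 1)) + g k)
    {j : ℕ} (hj : 1 ≤ j) (hjK : j ≤ K) :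
    adjoint (eulerIterDeriv f h θ j) (lam j) =
      ∑ k ∈ Finset.Icc j K, adjoint (eulerIterDeriv f h θ k) (g k) := by
  induction hjK using Nat.decreasingInduction with
  | self => rw [Finset.Icc_self, Finset.sum_singleton, hlamK]
  | of_succ j hjK ih =>
    rw [Finset.Icc_eq_cons_Ioc hjK.le, Finset.sum_cons, ← Finset.Icc_add_one_left_eq_Ioc,
      ← ih (by omega), adjoint_eulerIterDeriv_succ_apply, hlam j hj hjK, map_add, add_comm]

end Adjoint

theorem stmt_11_general (M K : ℕ) (hK : 1 ≤ K)
    (f : EuclideanSpace ℝ (Fin M) → EuclideanSpace ℝ (Fin M))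
    (hf : Differentiable ℝ f)
    (h : ℕ → ℝ)
    (ℓ : ℕ → EuclideanSpace ℝ (Fin M) → ℝ) (hℓ : ∀ k, Differentiable ℝ (ℓ k))
    (θ : EuclideanSpace ℝ (Fin M))
    (lam : ℕ → EuclideanSpace ℝ (Fin M))
    (hlamK : lam K = gradient (ℓ K) (eulerIter f h θ K))
    (hlam : ∀ k, 1 ≤ k → k < K → lam k = lam (k + 1) +
      h k • (ContinuousLinearMap.adjoint (fderiv ℝ f (eulerIter f h θ k))) (lam (k + 1)) +
      gradient (ℓ k) (eulerIter f h θ k))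
    (hlam0 : lam 0 = lam 1 +
      h 0 • (ContinuousLinearMap.adjoint (fderiv ℝ f (eulerIter f h θ 0))) (lam 1)) :
    lam 0 = gradient (fun θ' => ∑ k ∈ Finset.Icc 1 K, ℓ k (eulerIter f h θ' k)) θ := by
  have hgrad : HasGradientAt (fun θ' => ∑ k ∈ Finset.Icc 1 K, ℓ k (eulerIter f h θ' k))
      (∑ k ∈ Finset.Icc 1 K,
        adjoint (eulerIterDeriv f h θ k) (gradient (ℓ k) (eulerIter f h θ k))) θ :=
    HasGradientAt.sum fun k _ =>
      (hℓ k _).hasGradientAt.comp_hasFDerivAt_s11 (hasFDerivAt_eulerIter h θ hf k)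
  have hlam1 : lam 0 = adjoint (eulerIterDeriv f h θ 1) (lam 1) := by
    rw [adjoint_eulerIterDeriv_succ_apply, eulerIterDeriv, adjoint_id, hlam0, id_apply]
  rw [hgrad.gradient, hlam1, adjoint_eulerIterDeriv_apply_eq_sum h θ
    (g := fun k => gradient (ℓ k) (eulerIter f h θ k)) hlamK hlam le_rfl hK]

/-- Backward adjoint algorithm with per-step loss injections: for
`R̃(θ) = ∑_{k=1}^K ℓ_k(x̃_k(θ))` defined through explicit Euler iterates, the backward
recursion `λ_K = ∇ℓ_K(x̃_K)`, `λ_k = λ_{k+1} + h_k (Df(x̃_k))ᵀ λ_{k+1} + ∇ℓ_k(x̃_k)`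
for `1 ≤ k < K`, and `λ₀ = λ₁ + h₀ (Df(x̃₀))ᵀ λ₁` yields `λ₀ = ∇R̃(θ)`. -/
theorem stmt_11 (M K : ℕ) (hK : 1 ≤ K)
    (f : EuclideanSpace ℝ (Fin M) → EuclideanSpace ℝ (Fin M))
    (hf : Differentiable ℝ f)
    (h : ℕ → ℝ) (hh : ∀ k, k < K → 0 < h k)
    (ℓ : ℕ → EuclideanSpace ℝ (Fin M) → ℝ) (hℓ : ∀ k, Differentiable ℝ (ℓ k))
    (θ : EuclideanSpace ℝ (Fin M))
    (lam : ℕ → EuclideanSpace ℝ (Fin M))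
    (hlamK : lam K = gradient (ℓ K) (eulerIter f h θ K))
    (hlam : ∀ k, 1 ≤ k → k < K → lam k = lam (k + 1) +
      h k • (ContinuousLinearMap.adjoint (fderiv ℝ f (eulerIter f h θ k))) (lam (k + 1)) +
      gradient (ℓ k) (eulerIter f h θ k))
    (hlam0 : lam 0 = lam 1 +
      h 0 • (ContinuousLinearMap.adjoint (fderiv ℝ f (eulerIter f h θ 0))) (lam 1)) :
    lam 0 = gradient (fun θ' => ∑ k ∈ Finset.Icc 1 K, ℓ k (eulerIter f h θ' k)) θ :=
  stmt_11_general M K hK f hf h ℓ hℓ θ lam hlamK hlam hlam0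
end
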